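/- If G(s,x) is holomorphic in both variables on a neighborhood of (s0+S_j(x0), x0) in C^2, then the function (R_j G)(s,x) = ∫_{x0}^{x} (D₁G)(s + S_j(x) − S_j(y), y) p_j(y) dy, where the integral is along a path in a simply connected domain where p_j is holomorphic and S_j(x)=∫_{x0}^x p_j, is holomorphic in (s,x) on a neighborhood of (s0,x0). -/

import Mathlib

/-!
Write `H = ∂₁G` and `y = x₀ + t (x - x₀)`. The integrand `H(s + S x - S y, y) p(y) (x - x₀)`
stays holomorphic in `(s, x, τ)` when the segment parameter `t` is replaced by a complex `τ`;
a parametric integral over `[0, 1]` of a `C¹` function can be differentiated under the integral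
sign, so `R G` is holomorphic wherever the whole segment stays in the domain of the integrand,
an open set (tube lemma) containing `(s₀, x₀)` because there the segment is the single point `x₀`.

It remains to see that `H` is `C¹` in both variables. The Cauchy formula in the first variable,
`∂₁G(s, x) = (2πi)⁻¹ ∮ G(ζ, x) (ζ - s)⁻² dζ`, expresses `∂₁G` again as such a parametric
integral: this shows first that the partial derivatives of `G` are continuous, so `G` is `C¹`,
and then that `∂₁G` is holomorphic, hence `C¹` as well.
-/

open Complex Set Metric Filter Topology MeasureTheory Real
open scoped Interval

section ParametricIntegral

variable {X : Type*} [TopologicalSpace X] {P : Type*} [TopologicalSpace P]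
  {V : Set (X × P)} {γ : ℝ → P} {a b : ℝ}

theorem eventually_forall_uIcc_mem (hV : IsOpen V) (hγ : Continuous γ) {q₀ : X}
    (h : ∀ t ∈ [[a, b]], (q₀, γ t) ∈ V) : ∀ᶠ q in 𝓝 q₀, ∀ t ∈ [[a, b]], (q, γ t) ∈ V :=
  isCompact_uIcc.eventually_forall_of_forall_eventually fun t ht =>
    (continuous_fst.prodMk (hγ.comp continuous_snd)).continuousAt.preimage_mem_nhds
      (hV.mem_nhds (h t ht))

theorem isOpen_setOf_forall_uIcc_mem (hV : IsOpen V) (hγ : Continuous γ) :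
    IsOpen {q | ∀ t ∈ [[a, b]], (q, γ t) ∈ V} :=
  isOpen_iff_mem_nhds.2 fun _ hq => eventually_forall_uIcc_mem hV hγ hq

theorem exists_isCompact_mem_nhds_forall_uIcc_mem [LocallyCompactSpace X] (hV : IsOpen V)
    (hγ : Continuous γ) {q₀ : X} (h : ∀ t ∈ [[a, b]], (q₀, γ t) ∈ V) :
    ∃ K ∈ 𝓝 q₀, IsCompact K ∧ ∀ q ∈ K, ∀ t ∈ [[a, b]], (q, γ t) ∈ V := by
  obtain ⟨K, hK, hKV, hKc⟩ := local_compact_nhds (eventually_forall_uIcc_mem hV hγ h)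
  exact ⟨K, hK, hKc, hKV⟩

variable {F : Type*} [NormedAddCommGroup F] [NormedSpace ℂ F] {Φ : X × P → F} {w : ℝ → ℂ}

theorem ContinuousOn.smul_comp_prodMk_uIcc (hΦ : ContinuousOn Φ V) (hγ : Continuous γ)
    (hw : Continuous w) {K : Set X} (hKV : ∀ q ∈ K, ∀ t ∈ [[a, b]], (q, γ t) ∈ V) :
    ContinuousOn (fun ξ : X × ℝ => w ξ.2 • Φ (ξ.1, γ ξ.2)) (K ×ˢ [[a, b]]) :=
  (hw.comp continuous_snd).continuousOn.smul <|
    hΦ.comp (continuous_fst.prodMk (hγ.comp continuous_snd)).continuousOn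
      fun ξ hξ => hKV ξ.1 hξ.1 ξ.2 hξ.2

theorem continuousAt_intervalIntegral_smul_comp [LocallyCompactSpace X] [FirstCountableTopology X]
    (hV : IsOpen V) (hΦ : ContinuousOn Φ V) (hγ : Continuous γ) (hw : Continuous w) {q₀ : X}
    (h : ∀ t ∈ [[a, b]], (q₀, γ t) ∈ V) :
    ContinuousAt (fun q => ∫ t in a..b, w t • Φ (q, γ t)) q₀ := by
  obtain ⟨K, hK, hKc, hKV⟩ := exists_isCompact_mem_nhds_forall_uIcc_mem hV hγ h
  have hcont := hΦ.smul_comp_prodMk_uIcc hγ hw hKV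
  have hslice : ∀ q ∈ K, ContinuousOn (fun t => w t • Φ (q, γ t)) [[a, b]] := fun q hq =>
    hcont.comp (Continuous.prodMk_right q).continuousOn fun t ht => ⟨hq, ht⟩
  obtain ⟨C, hC⟩ := (hKc.prod isCompact_uIcc).exists_bound_of_continuousOn hcont
  refine intervalIntegral.continuousAt_of_dominated_interval (bound := fun _ => C) ?_ ?_
    intervalIntegrable_const ?_
  · filter_upwards [hK] with q hq
    exact ((hslice q hq).mono uIoc_subset_uIcc).aestronglyMeasurable measurableSet_uIoc
  · filter_upwards [hK] with q hq
    exact ae_of_all _ fun t ht => hC (q, t) ⟨hq, uIoc_subset_uIcc ht⟩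
  · refine ae_of_all _ fun t ht => ?_
    have : ContinuousOn (fun q => w t • Φ (q, γ t)) K :=
      hcont.comp (Continuous.prodMk_left t).continuousOn fun q hq => ⟨hq, uIoc_subset_uIcc ht⟩
    exact this.continuousAt hK

end ParametricIntegral

section ParametricDerivative

variable {E P F : Type*} [NormedAddCommGroup E] [NormedSpace ℂ E] [LocallyCompactSpace E]
  [NormedAddCommGroup P] [NormedSpace ℂ P] [NormedAddCommGroup F] [NormedSpace ℂ F]
  {V : Set (E × P)} {Φ : E × P → F} {γ : ℝ → P} {w : ℝ → ℂ} {a b : ℝ}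

theorem differentiableAt_intervalIntegral_smul_comp (hV : IsOpen V) (hΦ : ContDiffOn ℂ 1 Φ V)
    (hγ : Continuous γ) (hw : Continuous w) {q₀ : E} (h : ∀ t ∈ [[a, b]], (q₀, γ t) ∈ V) :
    DifferentiableAt ℂ (fun q => ∫ t in a..b, w t • Φ (q, γ t)) q₀ := by
  obtain ⟨K, hK, hKc, hKV⟩ := exists_isCompact_mem_nhds_forall_uIcc_mem hV hγ h
  set Φ' : E × P → E →L[ℂ] F := fun ξ => (fderiv ℂ Φ ξ).comp (ContinuousLinearMap.inl ℂ E P)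
  have hΦ' : ContinuousOn Φ' V :=
    (hΦ.continuousOn_fderiv_of_isOpen hV le_rfl).clm_comp continuousOn_const
  have hcont := hΦ.continuousOn.smul_comp_prodMk_uIcc hγ hw hKV
  have hcont' := hΦ'.smul_comp_prodMk_uIcc hγ hw hKV
  have hslice : ∀ q ∈ K, ContinuousOn (fun t => w t • Φ (q, γ t)) [[a, b]] := fun q hq =>
    hcont.comp (Continuous.prodMk_right q).continuousOn fun t ht => ⟨hq, ht⟩
  obtain ⟨C, hC⟩ := (hKc.prod isCompact_uIcc).exists_bound_of_continuousOn hcont'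
  have hderiv : ∀ q ∈ K, ∀ t ∈ [[a, b]],
      HasFDerivAt (fun q => w t • Φ (q, γ t)) (w t • Φ' (q, γ t)) q := fun q hq t ht =>
    have hΦq := (hΦ.differentiableOn one_ne_zero).differentiableAt (hV.mem_nhds (hKV q hq t ht))
    (hΦq.hasFDerivAt.comp q (hasFDerivAt_prodMk_left q (γ t))).const_smul (w t)
  refine HasFDerivAt.differentiableAt <|
    intervalIntegral.hasFDerivAt_integral_of_dominated_of_fderiv_le (bound := fun _ => C)
      (F' := fun q t => w t • Φ' (q, γ t)) hK ?_ ?_ ?_ ?_ intervalIntegrable_const ?_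
  · filter_upwards [hK] with q hq
    exact ((hslice q hq).mono uIoc_subset_uIcc).aestronglyMeasurable measurableSet_uIoc
  · exact (hslice q₀ (mem_of_mem_nhds hK)).intervalIntegrable
  · exact ((hcont'.comp (Continuous.prodMk_right q₀).continuousOn fun t ht =>
      ⟨mem_of_mem_nhds hK, ht⟩).mono uIoc_subset_uIcc).aestronglyMeasurable
        measurableSet_uIoc
  · exact ae_of_all _ fun t ht q hq => hC (q, t) ⟨hq, uIoc_subset_uIcc ht⟩
  · exact ae_of_all _ fun t ht q hq => hderiv q hq t (uIoc_subset_uIcc ht)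

theorem differentiableOn_intervalIntegral_smul_comp (hV : IsOpen V) (hΦ : ContDiffOn ℂ 1 Φ V)
    (hγ : Continuous γ) (hw : Continuous w) :
    DifferentiableOn ℂ (fun q => ∫ t in a..b, w t • Φ (q, γ t))
      {q | ∀ t ∈ [[a, b]], (q, γ t) ∈ V} := fun _ hq =>
  (differentiableAt_intervalIntegral_smul_comp hV hΦ hγ hw hq).differentiableWithinAt

end ParametricDerivative

section TwoVariables

variable {E : Type*} [NormedAddCommGroup E] [NormedSpace ℂ E] {f : ℂ × ℂ → E}
  {U : Set (ℂ × ℂ)}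

noncomputable def partialFst (f : ℂ × ℂ → E) (q : ℂ × ℂ) : E :=
  deriv (fun z => f (z, q.2)) q.1

noncomputable def partialSnd (f : ℂ × ℂ → E) (q : ℂ × ℂ) : E :=
  deriv (fun z => f (q.1, z)) q.2

theorem DifferentiableOn.comp_swap (hf : DifferentiableOn ℂ f U) :
    DifferentiableOn ℂ (f ∘ Prod.swap) (Prod.swap ⁻¹' U) :=
  hf.comp (differentiableOn_snd.prodMk differentiableOn_fst) fun _ hq => hq

theorem fderiv_eq_partialFst_add_partialSnd {q : ℂ × ℂ} (hf : DifferentiableAt ℂ f q) :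
    fderiv ℂ f q = (ContinuousLinearMap.fst ℂ ℂ ℂ).smulRight (partialFst f q)
      + (ContinuousLinearMap.snd ℂ ℂ ℂ).smulRight (partialSnd f q) := by
  have h₁ : partialFst f q = fderiv ℂ f q (1, 0) :=
    (hf.hasFDerivAt.comp_hasDerivAt q.1 ((hasDerivAt_id _).prodMk (hasDerivAt_const _ _))).deriv
  have h₂ : partialSnd f q = fderiv ℂ f q (0, 1) :=
    (hf.hasFDerivAt.comp_hasDerivAt q.2 ((hasDerivAt_const _ _).prodMk (hasDerivAt_id _))).deriv
  ext <;> simp [h₁, h₂]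

def cauchyDomain (U : Set (ℂ × ℂ)) : Set ((ℂ × ℂ) × ℂ) :=
  {ξ | ξ.2 ≠ ξ.1.1 ∧ (ξ.2, ξ.1.2) ∈ U}

theorem isOpen_cauchyDomain (hU : IsOpen U) : IsOpen (cauchyDomain U) :=
  (isOpen_ne_fun continuous_snd continuous_fst.fst).inter
    (hU.preimage (continuous_snd.prodMk continuous_fst.snd))

theorem contDiffOn_cauchyIntegrand {n : WithTop ℕ∞} (hf : ContDiffOn ℂ n f U) :
    ContDiffOn ℂ n (fun ξ : (ℂ × ℂ) × ℂ => ((ξ.2 - ξ.1.1) ^ 2)⁻¹ • f (ξ.2, ξ.1.2))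
      (cauchyDomain U) :=
  (((contDiff_snd.sub contDiff_fst.fst).pow 2).contDiffOn.inv fun _ hξ =>
      pow_ne_zero 2 (sub_ne_zero.2 hξ.1)).smul
    (hf.comp (contDiff_snd.prodMk contDiff_fst.snd).contDiffOn fun _ hξ => hξ.2)

variable [CompleteSpace E]

theorem partialFst_eventuallyEq_circleIntegral (hU : IsOpen U) (hf : DifferentiableOn ℂ f U)
    {q₀ : ℂ × ℂ} (hq₀ : q₀ ∈ U) :
    ∃ δ > 0, (∀ θ, (q₀, circleMap q₀.1 δ θ) ∈ cauchyDomain U) ∧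
      partialFst f =ᶠ[𝓝 q₀] fun q => (2 * π * I : ℂ)⁻¹ • ∫ θ in (0 : ℝ)..2 * π,
        deriv (circleMap q₀.1 δ) θ •
          (((circleMap q₀.1 δ θ - q.1) ^ 2)⁻¹ • f (circleMap q₀.1 δ θ, q.2)) := by
  obtain ⟨δ, hδ, hδU⟩ := nhds_basis_closedBall.mem_iff.mp (hU.mem_nhds hq₀)
  refine ⟨δ, hδ, fun θ => ⟨circleMap_ne_center hδ.ne', hδU ?_⟩, ?_⟩
  · rw [← closedBall_prod_same]
    exact ⟨sphere_subset_closedBall (circleMap_mem_sphere _ hδ.le θ), mem_closedBall_self hδ.le⟩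
  · filter_upwards [ball_mem_nhds q₀ hδ] with q hq
    rw [← ball_prod_same] at hq
    have hslice : closedBall q₀.1 δ ⊆ {z | (z, q.2) ∈ U} := fun z hz => hδU <| by
      rw [← closedBall_prod_same]
      exact ⟨hz, ball_subset_closedBall hq.2⟩
    exact (two_pi_I_inv_smul_circleIntegral_sub_sq_inv_smul_of_differentiable
      (hU.preimage (continuous_id.prodMk continuous_const)) hslice
      (hf.comp (differentiableOn_id.prodMk (differentiableOn_const _)) fun _ h => h) hq.1).symm

theorem continuousOn_partialFst (hU : IsOpen U) (hf : DifferentiableOn ℂ f U) :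
    ContinuousOn (partialFst f) U := fun q₀ hq₀ => by
  obtain ⟨δ, -, hmem, heq⟩ := partialFst_eventuallyEq_circleIntegral hU hf hq₀
  refine (ContinuousAt.congr ?_ heq.symm).continuousWithinAt
  exact continuousAt_const.smul <| continuousAt_intervalIntegral_smul_comp
    (isOpen_cauchyDomain hU) (contDiffOn_zero.1 (contDiffOn_cauchyIntegrand
      (contDiffOn_zero.2 hf.continuousOn))) (continuous_circleMap _ _)
    (by rw [funext (deriv_circleMap _ _)]; fun_prop) fun θ _ => hmem θ

theorem continuousOn_partialSnd (hU : IsOpen U) (hf : DifferentiableOn ℂ f U) :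
    ContinuousOn (partialSnd f) U :=
  (continuousOn_partialFst (hU.preimage continuous_swap) hf.comp_swap).comp
    continuous_swap.continuousOn fun _ hq => hq

theorem contDiffOn_one_of_differentiableOn (hU : IsOpen U) (hf : DifferentiableOn ℂ f U) :
    ContDiffOn ℂ 1 f U := by
  rw [show (1 : WithTop ℕ∞) = 0 + 1 from rfl, contDiffOn_succ_iff_fderiv_of_isOpen hU,
    contDiffOn_zero]
  refine ⟨hf, by simp, ?_⟩
  refine ContinuousOn.congr ?_ fun q hq =>
    fderiv_eq_partialFst_add_partialSnd (hf.differentiableAt (hU.mem_nhds hq))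
  exact ((ContinuousLinearMap.smulRightL ℂ (ℂ × ℂ) E (ContinuousLinearMap.fst ℂ ℂ ℂ)).continuous
      |>.comp_continuousOn (continuousOn_partialFst hU hf)).add
    ((ContinuousLinearMap.smulRightL ℂ (ℂ × ℂ) E (ContinuousLinearMap.snd ℂ ℂ ℂ)).continuous
      |>.comp_continuousOn (continuousOn_partialSnd hU hf))

theorem differentiableOn_partialFst (hU : IsOpen U) (hf : DifferentiableOn ℂ f U) :
    DifferentiableOn ℂ (partialFst f) U := fun q₀ hq₀ => by
  obtain ⟨δ, -, hmem, heq⟩ := partialFst_eventuallyEq_circleIntegral hU hf hq₀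
  refine (DifferentiableAt.congr_of_eventuallyEq ?_ heq).differentiableWithinAt
  exact (differentiableAt_intervalIntegral_smul_comp (isOpen_cauchyDomain hU)
    (contDiffOn_cauchyIntegrand (contDiffOn_one_of_differentiableOn hU hf))
    (continuous_circleMap _ _) (by rw [funext (deriv_circleMap _ _)]; fun_prop)
    fun θ _ => hmem θ).const_smul _

end TwoVariables

section SegmentIntegrand

variable {D : Set ℂ} {U : Set (ℂ × ℂ)} {x₀ : ℂ} {p S : ℂ → ℂ}

/-- The segment parameter `τ` is complex, so that the integrand of `R G` becomes a holomorphic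
function of `((s, x), τ)` on this set. -/
def segmentDomain (D : Set ℂ) (U : Set (ℂ × ℂ)) (x₀ : ℂ) (S : ℂ → ℂ) : Set ((ℂ × ℂ) × ℂ) :=
  {ξ | ξ.1.2 ∈ D ∧ x₀ + ξ.2 * (ξ.1.2 - x₀) ∈ D} ∩
    (fun ξ => (ξ.1.1 + S ξ.1.2 - S (x₀ + ξ.2 * (ξ.1.2 - x₀)), x₀ + ξ.2 * (ξ.1.2 - x₀))) ⁻¹' U

theorem isOpen_segmentDomain (hD : IsOpen D) (hU : IsOpen U) (hS : ContinuousOn S D) :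
    IsOpen (segmentDomain D U x₀ S) := by
  have hy : Continuous fun ξ : (ℂ × ℂ) × ℂ => x₀ + ξ.2 * (ξ.1.2 - x₀) := by fun_prop
  refine ContinuousOn.isOpen_inter_preimage ?_
    ((hD.preimage (by fun_prop)).inter (hD.preimage hy)) hU
  exact ((continuousOn_fst.fst.add (hS.comp continuousOn_fst.snd fun _ h => h.1)).sub
    (hS.comp hy.continuousOn fun _ h => h.2)).prodMk hy.continuousOn

theorem contDiffOn_segmentIntegrand {n : WithTop ℕ∞} {H : ℂ × ℂ → ℂ} (hD : IsOpen D)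
    (hp : DifferentiableOn ℂ p D) (hS : DifferentiableOn ℂ S D) (hH : ContDiffOn ℂ n H U) :
    ContDiffOn ℂ n (fun ξ : (ℂ × ℂ) × ℂ =>
      H (ξ.1.1 + S ξ.1.2 - S (x₀ + ξ.2 * (ξ.1.2 - x₀)), x₀ + ξ.2 * (ξ.1.2 - x₀))
        * p (x₀ + ξ.2 * (ξ.1.2 - x₀)) * (ξ.1.2 - x₀)) (segmentDomain D U x₀ S) := by
  have hy : ContDiff ℂ n fun ξ : (ℂ × ℂ) × ℂ => x₀ + ξ.2 * (ξ.1.2 - x₀) := by fun_prop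
  have hSy : ContDiffOn ℂ n (fun ξ : (ℂ × ℂ) × ℂ => S (x₀ + ξ.2 * (ξ.1.2 - x₀)))
      (segmentDomain D U x₀ S) :=
    (hS.contDiffOn hD).comp hy.contDiffOn fun _ h => h.1.2
  have hSx : ContDiffOn ℂ n (fun ξ : (ℂ × ℂ) × ℂ => S ξ.1.2) (segmentDomain D U x₀ S) :=
    (hS.contDiffOn hD).comp contDiff_fst.snd.contDiffOn fun _ h => h.1.1
  have hpy : ContDiffOn ℂ n (fun ξ : (ℂ × ℂ) × ℂ => p (x₀ + ξ.2 * (ξ.1.2 - x₀)))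
      (segmentDomain D U x₀ S) :=
    (hp.contDiffOn hD).comp hy.contDiffOn fun _ h => h.1.2
  refine (hH.comp ((contDiff_fst.fst.contDiffOn.add hSx).sub hSy |>.prodMk hy.contDiffOn)
    fun _ h => h.2).mul hpy |>.mul ?_
  fun_prop

end SegmentIntegrand

theorem stmt_0_general
    (D : Set ℂ) (hD : IsOpen D)
    (x0 : ℂ) (hx0 : x0 ∈ D)
    (p S : ℂ → ℂ) (hp : DifferentiableOn ℂ p D)
    (hS : ∀ x ∈ D, HasDerivAt S (p x) x) (hS0 : S x0 = 0)
    (G : ℂ → ℂ → ℂ) (s0 : ℂ)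
    (U : Set (ℂ × ℂ)) (hU : IsOpen U) (hmem : (s0 + S x0, x0) ∈ U)
    (hG : DifferentiableOn ℂ (fun q : ℂ × ℂ => G q.1 q.2) U) :
    ∃ W : Set (ℂ × ℂ), IsOpen W ∧ (s0, x0) ∈ W ∧
      DifferentiableOn ℂ
        (fun q : ℂ × ℂ =>
          ∫ t in (0:ℝ)..1,
            deriv (fun z => G z (x0 + (t : ℂ) * (q.2 - x0)))
                (q.1 + S q.2 - S (x0 + (t : ℂ) * (q.2 - x0)))
              * p (x0 + (t : ℂ) * (q.2 - x0)) * (q.2 - x0)) W := by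
  have hSD : DifferentiableOn ℂ S D := fun x hx =>
    (hS x hx).differentiableAt.differentiableWithinAt
  have hH : ContDiffOn ℂ 1 (partialFst fun q : ℂ × ℂ => G q.1 q.2) U :=
    contDiffOn_one_of_differentiableOn hU (differentiableOn_partialFst hU hG)
  have hV : IsOpen (segmentDomain D U x0 S) := isOpen_segmentDomain hD hU hSD.continuousOn
  refine ⟨{q | ∀ t ∈ [[(0 : ℝ), 1]], (q, (t : ℂ)) ∈ segmentDomain D U x0 S},
    isOpen_setOf_forall_uIcc_mem hV continuous_ofReal, fun t _ => ?_, ?_⟩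
  · refine ⟨⟨hx0, by simpa using hx0⟩, ?_⟩
    simpa [hS0] using hmem
  · simpa only [one_smul, partialFst] using
      differentiableOn_intervalIntegral_smul_comp (w := fun _ => 1) hV
        (contDiffOn_segmentIntegrand hD hp hSD hH) continuous_ofReal continuous_const

/-- If `G(s,x)` is holomorphic in both variables near `(s0 + S_j x0, x0)`,
then `(R_j G)(s,x) = ∫_{x0}^x (D₁G)(s + S_j x − S_j y, y) p_j y dy` (along the straight
path from `x0` to `x` in the simply connected domain `D` where `p_j` is holomorphic and
`S_j` is its primitive) is holomorphic in `(s,x)` near `(s0, x0)`. -/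
theorem stmt_0
    (D : Set ℂ) (hD : IsOpen D) (hDconn : IsConnected D)
    (hDsc : SimplyConnectedSpace D)
    (x0 : ℂ) (hx0 : x0 ∈ D)
    (p S : ℂ → ℂ) (hp : DifferentiableOn ℂ p D)
    (hS : ∀ x ∈ D, HasDerivAt S (p x) x) (hS0 : S x0 = 0)
    (G : ℂ → ℂ → ℂ) (s0 : ℂ)
    (U : Set (ℂ × ℂ)) (hU : IsOpen U) (hmem : (s0 + S x0, x0) ∈ U)
    (hG : DifferentiableOn ℂ (fun q : ℂ × ℂ => G q.1 q.2) U) :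
    ∃ W : Set (ℂ × ℂ), IsOpen W ∧ (s0, x0) ∈ W ∧
      DifferentiableOn ℂ
        (fun q : ℂ × ℂ =>
          ∫ t in (0:ℝ)..1,
            deriv (fun z => G z (x0 + (t : ℂ) * (q.2 - x0)))
                (q.1 + S q.2 - S (x0 + (t : ℂ) * (q.2 - x0)))
              * p (x0 + (t : ℂ) * (q.2 - x0)) * (q.2 - x0)) W :=
  stmt_0_general D hD x0 hx0 p S hp hS hS0 G s0 U hU hmem hG
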